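/- Let m ∈ ℕ and let 𝒫 = {P_f : f ∈ ℱ} and 𝒬 = {Q_f : f ∈ ℱ} be dominated statistical models on standard Borel sample spaces 𝒳 and 𝒳̃, indexed by the same set ℱ, with m·𝔡(𝒬;𝒫) ≤ ϱ for some ϱ > 0. Then for any measurable decision space (𝒟, 𝒜_𝒟) and any loss function ℓ : ℱ × 𝒟 → [0,1] with t ↦ ℓ(f,t) measurable for all f, inf_{D ∈ 𝒥_𝒬} R_𝒬(D, ℓ) − inf_{D ∈ 𝒥_𝒫} R_𝒫(D, ℓ) ≤ ϱ, where 𝒥_𝒫 and 𝒥_𝒬 denote the matching classes of one-shot distributed protocols (shared-randomness or local-randomness) for 𝒫 and 𝒬 satisfying either a b-bit bandwidth constraint or a local (ε,δ)-differential privacy constraint. -/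

import Mathlib

open MeasureTheory ProbabilityTheory

/-- Total variation distance between two measures:
`‖μ − ν‖_TV = sup_A |μ(A) − ν(A)|` over measurable sets `A`. -/
noncomputable def tvDist {X : Type*} [MeasurableSpace X]
    (μ ν : Measure X) : ℝ :=
  ⨆ A : {A : Set X // MeasurableSet A}, |(μ A.1).toReal - (ν A.1).toReal|

/-- The deficiency `𝔡(𝒬;𝒫) = inf_C sup_f ‖Q_f C − P_f‖_TV` of the model `𝒬` with
respect to `𝒫`, the infimum running over all Markov kernels between the sample
spaces. -/
noncomputable def deficiency {F : Type*} {X Xt : Type*}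
    [MeasurableSpace X] [MeasurableSpace Xt]
    (Q : F → Measure X) (P : F → Measure Xt) : ℝ :=
  ⨅ C : {C : Kernel X Xt // IsMarkovKernel C},
    ⨆ f : F, tvDist ((Q f).bind fun x => C.1 x) (P f)

section TV

variable {Z : Type*} [MeasurableSpace Z]

instance : Nonempty {A : Set Z // MeasurableSet A} := ⟨⟨∅, MeasurableSet.empty⟩⟩

lemma toReal_prob_le_one {μ : Measure Z} [IsProbabilityMeasure μ] (A : Set Z) :
    (μ A).toReal ≤ 1 := by
  have h := prob_le_one (μ := μ) (s := A)
  simpa using ENNReal.toReal_mono ENNReal.one_ne_top h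

lemma tv_term_le_one (μ ν : Measure Z) [IsProbabilityMeasure μ] [IsProbabilityMeasure ν]
    (A : Set Z) : |(μ A).toReal - (ν A).toReal| ≤ 1 := by
  rw [abs_sub_le_iff]
  constructor <;> nlinarith [toReal_prob_le_one (μ := μ) A, toReal_prob_le_one (μ := ν) A,
    ENNReal.toReal_nonneg (a := μ A), ENNReal.toReal_nonneg (a := ν A)]

lemma tv_bddAbove (μ ν : Measure Z) [IsProbabilityMeasure μ] [IsProbabilityMeasure ν] :
    BddAbove (Set.range fun A : {A : Set Z // MeasurableSet A} =>
      |(μ A.1).toReal - (ν A.1).toReal|) := by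
  refine ⟨1, ?_⟩
  rintro x ⟨A, rfl⟩
  exact tv_term_le_one μ ν A.1

lemma abs_le_tvDist {μ ν : Measure Z} [IsProbabilityMeasure μ] [IsProbabilityMeasure ν]
    {A : Set Z} (hA : MeasurableSet A) :
    |(μ A).toReal - (ν A).toReal| ≤ tvDist μ ν :=
  le_ciSup (tv_bddAbove μ ν) ⟨A, hA⟩

lemma le_tvDist {μ ν : Measure Z} [IsProbabilityMeasure μ] [IsProbabilityMeasure ν]
    {A : Set Z} (hA : MeasurableSet A) :
    (μ A).toReal - (ν A).toReal ≤ tvDist μ ν :=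
  (le_abs_self _).trans (abs_le_tvDist hA)

lemma tvDist_nonneg (μ ν : Measure Z) [IsProbabilityMeasure μ] [IsProbabilityMeasure ν] :
    0 ≤ tvDist μ ν := by
  have := abs_le_tvDist (μ := μ) (ν := ν) MeasurableSet.empty
  simpa using this

lemma tvDist_le {μ ν : Measure Z} {c : ℝ}
    (h : ∀ A : Set Z, MeasurableSet A → |(μ A).toReal - (ν A).toReal| ≤ c) :
    tvDist μ ν ≤ c :=
  ciSup_le fun A => h A.1 A.2

lemma tvDist_le_one (μ ν : Measure Z) [IsProbabilityMeasure μ] [IsProbabilityMeasure ν] :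
    tvDist μ ν ≤ 1 :=
  tvDist_le fun A _ => tv_term_le_one μ ν A

lemma tvDist_comm (μ ν : Measure Z) : tvDist μ ν = tvDist ν μ := by
  unfold tvDist
  congr 1
  funext A
  exact abs_sub_comm _ _

lemma tvDist_self (μ : Measure Z) : tvDist μ μ = 0 := by
  unfold tvDist
  simp

lemma tvDist_triangle (μ ν ρ : Measure Z) [IsProbabilityMeasure μ] [IsProbabilityMeasure ν]
    [IsProbabilityMeasure ρ] : tvDist μ ρ ≤ tvDist μ ν + tvDist ν ρ := by
  refine tvDist_le fun A hA => ?_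
  calc |(μ A).toReal - (ρ A).toReal|
      ≤ |(μ A).toReal - (ν A).toReal| + |(ν A).toReal - (ρ A).toReal| := abs_sub_le _ _ _
    _ ≤ tvDist μ ν + tvDist ν ρ := add_le_add (abs_le_tvDist hA) (abs_le_tvDist hA)

/-- Key bound: integral of a `[0,1]`-valued function differs by at most TV distance. -/
lemma integral_sub_le_tvDist (μ ν : Measure Z) [IsProbabilityMeasure μ] [IsProbabilityMeasure ν]
    {g : Z → ℝ} (hg : Measurable g) (h01 : ∀ z, g z ∈ Set.Icc (0 : ℝ) 1) :
    ∫ z, g z ∂μ - ∫ z, g z ∂ν ≤ tvDist μ ν := by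
  obtain ⟨E, hE, hpos, hneg⟩ :=
    (μ.toSignedMeasure - ν.toSignedMeasure).exists_compl_positive_negative
  have hintμ : Integrable g μ := by
    refine (integrable_const (1 : ℝ)).mono' hg.aestronglyMeasurable ?_
    exact ae_of_all _ fun z => by
      have := h01 z; rw [Real.norm_eq_abs, abs_le]; constructor <;> [linarith [this.1]; exact this.2]
  have hintν : Integrable g ν := by
    refine (integrable_const (1 : ℝ)).mono' hg.aestronglyMeasurable ?_
    exact ae_of_all _ fun z => by
      have := h01 z; rw [Real.norm_eq_abs, abs_le]; constructor <;> [linarith [this.1]; exact this.2]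
  -- ν restricted to E is below μ restricted to E
  have hresE : ν.restrict E ≤ μ.restrict E := by
    rw [Measure.le_iff]
    intro B hB
    rw [Measure.restrict_apply hB, Measure.restrict_apply hB]
    have h0 := (VectorMeasure.restrict_le_restrict_iff _ _ hE).1 hpos
      (hB.inter hE) Set.inter_subset_right
    rw [VectorMeasure.zero_apply, MeasureTheory.Measure.toSignedMeasure_sub_apply (hB.inter hE)]
      at h0
    exact (ENNReal.toReal_le_toReal (measure_ne_top _ _) (measure_ne_top _ _)).1 (by simp only [measureReal_def] at h0; linarith)
  have hresEc : μ.restrict Eᶜ ≤ ν.restrict Eᶜ := by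
    rw [Measure.le_iff]
    intro B hB
    rw [Measure.restrict_apply hB, Measure.restrict_apply hB]
    have h0 := (VectorMeasure.restrict_le_restrict_iff _ _ hE.compl).1 hneg
      (hB.inter hE.compl) Set.inter_subset_right
    rw [VectorMeasure.zero_apply, MeasureTheory.Measure.toSignedMeasure_sub_apply
      (hB.inter hE.compl)] at h0
    exact (ENNReal.toReal_le_toReal (measure_ne_top _ _) (measure_ne_top _ _)).1 (by simp only [measureReal_def] at h0; linarith)
  -- part 1 : on E
  have part1mu : ∫ z in E, ((1 : ℝ) - g z) ∂μ = (μ E).toReal - ∫ z in E, g z ∂μ := by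
    rw [integral_sub (integrable_const 1) hintμ.restrict, integral_const]
    simp
    rfl
  have part1nu : ∫ z in E, ((1 : ℝ) - g z) ∂ν = (ν E).toReal - ∫ z in E, g z ∂ν := by
    rw [integral_sub (integrable_const 1) hintν.restrict, integral_const]
    simp
    rfl
  have key1 : ∫ z in E, ((1 : ℝ) - g z) ∂ν ≤ ∫ z in E, ((1 : ℝ) - g z) ∂μ := by
    refine integral_mono_measure hresE (ae_of_all _ fun z => ?_)
      ((integrable_const 1).sub hintμ).restrict
    have := (h01 z).2
    simp only [Pi.zero_apply, sub_nonneg]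
    linarith
  have key2 : ∫ z in Eᶜ, g z ∂μ ≤ ∫ z in Eᶜ, g z ∂ν :=
    integral_mono_measure hresEc (ae_of_all _ fun z => (h01 z).1) hintν.restrict
  have hsplitmu := integral_add_compl hE hintμ
  have hsplitnu := integral_add_compl hE hintν
  have htv : (μ E).toReal - (ν E).toReal ≤ tvDist μ ν := le_tvDist hE
  linarith

end TV

section DataProcessing

variable {Z W : Type*} [MeasurableSpace Z] [MeasurableSpace W]

lemma isProbabilityMeasure_bind (μ : Measure Z) [IsProbabilityMeasure μ]
    {f : Z → Measure W} (hf : Measurable f) (hprob : ∀ z, IsProbabilityMeasure (f z)) :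
    IsProbabilityMeasure (μ.bind f) := by
  constructor
  rw [Measure.bind_apply MeasurableSet.univ hf.aemeasurable]
  simp [measure_univ]

lemma bind_toReal_eq (μ : Measure Z) [IsProbabilityMeasure μ] (κ : Kernel Z W)
    [IsMarkovKernel κ] {A : Set W} (hA : MeasurableSet A) :
    ((μ.bind ⇑κ) A).toReal = ∫ z, (κ z A).toReal ∂μ := by
  rw [Measure.bind_apply hA κ.measurable.aemeasurable,
    ← integral_toReal (κ.measurable_coe hA).aemeasurable
      (ae_of_all _ fun z => measure_lt_top _ _)]

lemma tvDist_bind_le (μ ν : Measure Z) [IsProbabilityMeasure μ] [IsProbabilityMeasure ν]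
    (κ : Kernel Z W) [IsMarkovKernel κ] :
    tvDist (μ.bind ⇑κ) (ν.bind ⇑κ) ≤ tvDist μ ν := by
  refine tvDist_le fun A hA => ?_
  rw [bind_toReal_eq μ κ hA, bind_toReal_eq ν κ hA]
  have hmeas : Measurable fun z => (κ z A).toReal := (κ.measurable_coe hA).ennreal_toReal
  have h01 : ∀ z, (κ z A).toReal ∈ Set.Icc (0 : ℝ) 1 :=
    fun z => ⟨ENNReal.toReal_nonneg, toReal_prob_le_one _⟩
  rw [abs_sub_le_iff]
  exact ⟨integral_sub_le_tvDist μ ν hmeas h01,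
    (integral_sub_le_tvDist ν μ hmeas h01).trans (tvDist_comm ν μ).le⟩

lemma tvDist_map_le (μ ν : Measure Z) [IsProbabilityMeasure μ] [IsProbabilityMeasure ν]
    {e : Z → W} (he : Measurable e) :
    tvDist (μ.map e) (ν.map e) ≤ tvDist μ ν := by
  refine tvDist_le fun A hA => ?_
  rw [Measure.map_apply he hA, Measure.map_apply he hA]
  exact abs_le_tvDist (he hA)

lemma tvDist_map_equiv (μ ν : Measure Z) [IsProbabilityMeasure μ] [IsProbabilityMeasure ν]
    (e : Z ≃ᵐ W) : tvDist (μ.map e) (ν.map e) = tvDist μ ν := by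
  refine le_antisymm (tvDist_map_le μ ν e.measurable) ?_
  haveI : IsProbabilityMeasure (μ.map e) := Measure.isProbabilityMeasure_map e.measurable.aemeasurable
  haveI : IsProbabilityMeasure (ν.map e) := Measure.isProbabilityMeasure_map e.measurable.aemeasurable
  have h := tvDist_map_le (μ.map ⇑e) (ν.map ⇑e) e.symm.measurable
  have hμ : (μ.map ⇑e).map ⇑e.symm = μ := by
    rw [Measure.map_map e.symm.measurable e.measurable]
    simp [Function.comp_def]
  have hν : (ν.map ⇑e).map ⇑e.symm = ν := by
    rw [Measure.map_map e.symm.measurable e.measurable]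
    simp [Function.comp_def]
  rwa [hμ, hν] at h

lemma prod_toReal_eq (α : Measure Z) (β : Measure W) [IsProbabilityMeasure α]
    [IsProbabilityMeasure β] {A : Set (Z × W)} (hA : MeasurableSet A) :
    ((α.prod β) A).toReal = ∫ z, (β (Prod.mk z ⁻¹' A)).toReal ∂α := by
  rw [Measure.prod_apply hA,
    ← integral_toReal (measurable_measure_prodMk_left hA).aemeasurable
      (ae_of_all _ fun z => measure_lt_top _ _)]

lemma tvDist_prod_left (α α' : Measure Z) (β : Measure W) [IsProbabilityMeasure α]
    [IsProbabilityMeasure α'] [IsProbabilityMeasure β] :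
    tvDist (α.prod β) (α'.prod β) ≤ tvDist α α' := by
  refine tvDist_le fun A hA => ?_
  rw [prod_toReal_eq α β hA, prod_toReal_eq α' β hA]
  have hmeas : Measurable fun z => (β (Prod.mk z ⁻¹' A)).toReal :=
    (measurable_measure_prodMk_left hA).ennreal_toReal
  have h01 : ∀ z, (β (Prod.mk z ⁻¹' A)).toReal ∈ Set.Icc (0 : ℝ) 1 :=
    fun z => ⟨ENNReal.toReal_nonneg, toReal_prob_le_one _⟩
  rw [abs_sub_le_iff]
  exact ⟨integral_sub_le_tvDist α α' hmeas h01,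
    (integral_sub_le_tvDist α' α hmeas h01).trans (tvDist_comm α' α).le⟩

lemma tvDist_prod (α α' : Measure Z) (β β' : Measure W) [IsProbabilityMeasure α]
    [IsProbabilityMeasure α'] [IsProbabilityMeasure β] [IsProbabilityMeasure β'] :
    tvDist (α.prod β) (α'.prod β') ≤ tvDist α α' + tvDist β β' := by
  have h1 : tvDist (α.prod β) (α'.prod β) ≤ tvDist α α' := tvDist_prod_left α α' β
  have h2 : tvDist (α'.prod β) (α'.prod β') ≤ tvDist β β' := by
    have e1 : α'.prod β = (β.prod α').map Prod.swap := (Measure.prod_swap).symm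
    have e2 : α'.prod β' = (β'.prod α').map Prod.swap := (Measure.prod_swap).symm
    rw [e1, e2]
    exact (tvDist_map_le _ _ measurable_swap).trans (tvDist_prod_left β β' α')
  calc tvDist (α.prod β) (α'.prod β')
      ≤ tvDist (α.prod β) (α'.prod β) + tvDist (α'.prod β) (α'.prod β') := tvDist_triangle _ _ _
    _ ≤ tvDist α α' + tvDist β β' := add_le_add h1 h2

end DataProcessing

section Pi

lemma tvDist_pi : ∀ {m : ℕ} {Y : Fin m → Type} [inst : ∀ j, MeasurableSpace (Y j)]
    (μ ν : ∀ j, Measure (Y j)), (∀ j, IsProbabilityMeasure (μ j)) →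
    (∀ j, IsProbabilityMeasure (ν j)) →
    tvDist (Measure.pi μ) (Measure.pi ν) ≤ ∑ j, tvDist (μ j) (ν j) := by
  intro m
  induction m with
  | zero =>
    intro Y inst μ ν hμ hν
    rw [Measure.pi_of_empty μ, Measure.pi_of_empty ν, tvDist_self]
    simp
  | succ n ih =>
    intro Y inst μ ν hμ hν
    haveI := hμ; haveI := hν
    haveI : ∀ j, IsProbabilityMeasure ((fun j => μ (Fin.succAbove 0 j)) j) := fun j => hμ _
    haveI : ∀ j, IsProbabilityMeasure ((fun j => ν (Fin.succAbove 0 j)) j) := fun j => hν _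
    have h1 := (MeasureTheory.measurePreserving_piFinSuccAbove μ 0).map_eq
    have h2 := (MeasureTheory.measurePreserving_piFinSuccAbove ν 0).map_eq
    have heq := tvDist_map_equiv (Measure.pi μ) (Measure.pi ν)
      (MeasurableEquiv.piFinSuccAbove Y 0)
    rw [h1, h2] at heq
    rw [← heq]
    calc tvDist ((μ 0).prod (Measure.pi fun j => μ (Fin.succAbove 0 j)))
          ((ν 0).prod (Measure.pi fun j => ν (Fin.succAbove 0 j)))
        ≤ tvDist (μ 0) (ν 0) + tvDist (Measure.pi fun j => μ (Fin.succAbove 0 j))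
            (Measure.pi fun j => ν (Fin.succAbove 0 j)) := tvDist_prod _ _ _ _
      _ ≤ tvDist (μ 0) (ν 0) + ∑ j : Fin n, tvDist (μ (Fin.succAbove 0 j))
            (ν (Fin.succAbove 0 j)) := by
          exact add_le_add_right (ih _ _ (fun j => hμ _) (fun j => hν _)) _
      _ = ∑ j, tvDist (μ j) (ν j) := by
          rw [Fin.sum_univ_succ]
          simp [Fin.succAbove_zero]
          rfl

end Pi

section Kernels

variable {U V W : Type*} [MeasurableSpace U] [MeasurableSpace V] [MeasurableSpace W]

/-- Measurability of `u ↦ Measure.pi (fun j => κ j u)` for Markov kernels `κ j`. -/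
lemma measurable_pi_kernel {m : ℕ} {Y : Fin m → Type} [∀ j, MeasurableSpace (Y j)]
    (κ : ∀ j, Kernel U (Y j)) [∀ j, IsMarkovKernel (κ j)] :
    Measurable fun u => Measure.pi fun j => κ j u := by
  rw [Measure.measurable_measure]
  intro S hS
  haveI : ∀ u j, IsProbabilityMeasure ((fun j => κ j u) j) := fun u j => inferInstance
  refine MeasurableSpace.induction_on_inter
    (C := fun S _ => Measurable fun u => Measure.pi (fun j => κ j u) S)
    (s := Set.pi Set.univ '' Set.pi Set.univ fun j => { s : Set (Y j) | MeasurableSet s })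
    generateFrom_pi.symm isPiSystem_pi ?_ ?_ ?_ ?_ S hS
  · simpa using measurable_const
  · rintro t ⟨A, hA, rfl⟩
    have h : ∀ u, Measure.pi (fun j => κ j u) (Set.pi Set.univ A) = ∏ j, κ j u (A j) :=
      fun u => Measure.pi_pi _ _
    simp only [h]
    exact Finset.measurable_prod _ fun j _ => (κ j).measurable_coe (hA j (Set.mem_univ j))
  · intro t ht iht
    have h : ∀ u, Measure.pi (fun j => κ j u) tᶜ = 1 - Measure.pi (fun j => κ j u) t := by
      intro u
      rw [measure_compl ht (measure_ne_top _ _)]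
      simp [measure_univ]
    simp only [h]
    exact Measurable.sub measurable_const iht
  · intro f hdisj hmeas ihf
    have h : ∀ u, Measure.pi (fun j => κ j u) (⋃ i, f i)
        = ∑' i, Measure.pi (fun j => κ j u) (f i) :=
      fun u => measure_iUnion hdisj hmeas
    simp only [h]
    exact Measurable.ennreal_tsum ihf

/-- The kernel `u ↦ ⊗_j κ j u`. -/
noncomputable def piKernel {m : ℕ} {Y : Fin m → Type} [∀ j, MeasurableSpace (Y j)]
    (κ : ∀ j, Kernel U (Y j)) [∀ j, IsMarkovKernel (κ j)] : Kernel U (∀ j, Y j) where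
  toFun := fun u => Measure.pi fun j => κ j u
  measurable' := measurable_pi_kernel κ

@[simp] lemma piKernel_apply {m : ℕ} {Y : Fin m → Type} [∀ j, MeasurableSpace (Y j)]
    (κ : ∀ j, Kernel U (Y j)) [∀ j, IsMarkovKernel (κ j)] (u : U) :
    piKernel κ u = Measure.pi fun j => κ j u := rfl

instance {m : ℕ} {Y : Fin m → Type} [∀ j, MeasurableSpace (Y j)]
    (κ : ∀ j, Kernel U (Y j)) [∀ j, IsMarkovKernel (κ j)] : IsMarkovKernel (piKernel κ) :=
  ⟨fun u => by rw [piKernel_apply]; infer_instance⟩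

/-- Measurability of `a ↦ ∫ b, g b ∂(κ a)`. -/
lemma measurable_kernel_integral (κ : Kernel U V) [IsSFiniteKernel κ] {g : V → ℝ}
    (hg : Measurable g) : Measurable fun u => ∫ v, g v ∂κ u := by
  have h : StronglyMeasurable (Function.uncurry fun (_ : U) (v : V) => g v) :=
    (hg.comp measurable_snd).stronglyMeasurable
  exact h.integral_kernel_prod_right.measurable

/-- `u ↦ ρ.bind (fun w => K (w, u))` as a kernel. -/
noncomputable def mixKernel (ρ : Measure W) [IsProbabilityMeasure ρ]
    (K : Kernel (W × U) V) [IsMarkovKernel K] : Kernel U V :=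
  K ∘ₖ ((Kernel.const U ρ) ×ₖ Kernel.id)

instance (ρ : Measure W) [IsProbabilityMeasure ρ] (K : Kernel (W × U) V) [IsMarkovKernel K] :
    IsMarkovKernel (mixKernel ρ K) := by
  unfold mixKernel; infer_instance

lemma mixKernel_apply (ρ : Measure W) [IsProbabilityMeasure ρ]
    (K : Kernel (W × U) V) [IsMarkovKernel K] (u : U) :
    mixKernel ρ K u = ρ.bind fun w => K (w, u) := by
  unfold mixKernel
  rw [Kernel.comp_apply, Kernel.prod_apply, Kernel.const_apply, Kernel.id_apply,
    Measure.prod_dirac]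
  ext A hA
  rw [Measure.bind_apply hA K.measurable.aemeasurable,
    lintegral_map (K.measurable_coe hA) measurable_prodMk_right,
    Measure.bind_apply (f := fun w => K (w, u)) hA (K.measurable.comp measurable_prodMk_right).aemeasurable]

end Kernels

/-- A one-shot distributed protocol for data in `X` with `m` servers and decision
space `Dsp`: shared randomness `(𝒰, P^U)`, Markov transcript kernels `K^j` from
`X × 𝒰` to spaces `Y^{(j)}`, and a Markov decision kernel `D` from the joint
transcripts to `Dsp`. -/
structure DecProtocol (X : Type) [MeasurableSpace X]
    (Dsp : Type) [MeasurableSpace Dsp] (m : ℕ) where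
  (U : Type)
  [mU : MeasurableSpace U]
  (PU : Measure U)
  (probU : IsProbabilityMeasure PU)
  (Y : Fin m → Type)
  [mY : ∀ j, MeasurableSpace (Y j)]
  (K : ∀ j, Kernel (X × U) (Y j))
  (markov : ∀ j, IsMarkovKernel (K j))
  (D : Kernel (∀ j, Y j) Dsp)
  (markovD : IsMarkovKernel D)

attribute [instance] DecProtocol.mU DecProtocol.mY

namespace DecProtocol

variable {X Dsp : Type} [MeasurableSpace X] [MeasurableSpace Dsp] {m : ℕ}

/-- The `b`-bit bandwidth constraint: each transcript space has at most `2^b`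
elements. -/
def HasBandwidth (p : DecProtocol X Dsp m) (b : ℕ) : Prop :=
  ∀ j, Nonempty (p.Y j ↪ Fin (2 ^ b))

/-- A local-randomness protocol: the shared randomness is degenerate. -/
def IsLocalRandomness (p : DecProtocol X Dsp m) : Prop :=
  ∃ u₀ : p.U, p.PU = Measure.dirac u₀

/-- The local `(ε,δ)`-differential privacy constraint: `P^U`-almost surely in `u`,
`K^j(A|x,u) ≤ e^ε K^j(A|x',u) + δ` for all measurable `A`, all data `x, x'` and all
servers `j`. -/
def IsDP (p : DecProtocol X Dsp m) (ε δ : ℝ) : Prop :=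
  ∀ᵐ u ∂p.PU, ∀ (j : Fin m) (A : Set (p.Y j)) (x x' : X), MeasurableSet A →
    p.K j (x, u) A ≤ ENNReal.ofReal (Real.exp ε) * p.K j (x', u) A + ENNReal.ofReal δ

/-- The distributed decision risk
`R_𝒫(D, ℓ) = sup_{f} ∫∫∫ ℓ(f, φ) dD(φ|y) d(⊗_j P_f K^j(·|·,u))(y) dP^U(u)`. -/
noncomputable def decRisk {F : Type} (P : F → Measure X) (ℓ : F → Dsp → ℝ)
    (p : DecProtocol X Dsp m) : ℝ :=
  ⨆ f : F, ∫ u, ∫ y, ∫ φ, ℓ f φ ∂(p.D y)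
    ∂(Measure.pi fun j => (P f).bind fun x => p.K j (x, u)) ∂p.PU

end DecProtocol


section Protocol

variable {X Xt Dsp : Type} [MeasurableSpace X] [MeasurableSpace Xt] [MeasurableSpace Dsp]
  {m : ℕ}

/-- Compose a protocol for data in `X` with a Markov kernel `C : Xt ⇝ X` to obtain a
protocol for data in `Xt`. -/
noncomputable def DecProtocol.comp (p : DecProtocol X Dsp m) (C : Kernel Xt X)
    [IsMarkovKernel C] : DecProtocol Xt Dsp m where
  U := p.U
  mU := p.mU
  PU := p.PU
  probU := p.probU
  Y := p.Y
  mY := p.mY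
  K := fun j => (p.K j) ∘ₖ ((C.prodMkRight p.U) ×ₖ Kernel.deterministic Prod.snd measurable_snd)
  markov := fun j => by haveI := p.markov j; infer_instance
  D := p.D
  markovD := p.markovD

lemma DecProtocol.comp_K_apply (p : DecProtocol X Dsp m) (C : Kernel Xt X) [IsMarkovKernel C]
    (j : Fin m) (xt : Xt) (u : p.U) :
    (p.comp C).K j (xt, u) = (C xt).bind fun x => p.K j (x, u) := by
  haveI := p.markov j
  show ((p.K j) ∘ₖ ((C.prodMkRight p.U) ×ₖ Kernel.deterministic Prod.snd measurable_snd))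
      (xt, u) = _
  rw [Kernel.comp_apply, Kernel.prod_apply, Kernel.prodMkRight_apply,
    Kernel.deterministic_apply, Measure.prod_dirac]
  ext A hA
  rw [Measure.bind_apply hA (p.K j).measurable.aemeasurable,
    lintegral_map ((p.K j).measurable_coe hA) measurable_prodMk_right,
    Measure.bind_apply (f := fun x => p.K j (x, u)) hA
      ((p.K j).measurable.comp measurable_prodMk_right).aemeasurable]

lemma DecProtocol.comp_hasBandwidth (p : DecProtocol X Dsp m) (C : Kernel Xt X)
    [IsMarkovKernel C] {b : ℕ} (h : p.HasBandwidth b) : (p.comp C).HasBandwidth b := h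

lemma DecProtocol.comp_isLocalRandomness (p : DecProtocol X Dsp m) (C : Kernel Xt X)
    [IsMarkovKernel C] (h : p.IsLocalRandomness) : (p.comp C).IsLocalRandomness := h

lemma DecProtocol.comp_isDP (p : DecProtocol X Dsp m) (C : Kernel Xt X) [IsMarkovKernel C]
    {ε δ : ℝ} (h : p.IsDP ε δ) : (p.comp C).IsDP ε δ := by
  filter_upwards [h] with u hu
  intro j A xt xt' hA
  haveI := p.markov j
  have hKmeas : Measurable fun x => p.K j (x, u) :=
    (p.K j).measurable.comp measurable_prodMk_right
  have hcoe : Measurable fun x => p.K j (x, u) A :=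
    ((p.K j).measurable_coe hA).comp measurable_prodMk_right
  erw [DecProtocol.comp_K_apply p C j xt u, DecProtocol.comp_K_apply p C j xt' u]
  erw [Measure.bind_apply hA hKmeas.aemeasurable, Measure.bind_apply hA hKmeas.aemeasurable]
  have key : ∀ x, p.K j (x, u) A
      ≤ ENNReal.ofReal (Real.exp ε) * (∫⁻ x', p.K j (x', u) A ∂(C xt')) + ENNReal.ofReal δ := by
    intro x
    have h1 : p.K j (x, u) A = ∫⁻ _, p.K j (x, u) A ∂(C xt') := by
      rw [lintegral_const, measure_univ, mul_one]
    rw [h1]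
    calc ∫⁻ _, p.K j (x, u) A ∂(C xt')
        ≤ ∫⁻ x', (ENNReal.ofReal (Real.exp ε) * p.K j (x', u) A + ENNReal.ofReal δ) ∂(C xt') :=
          lintegral_mono fun x' => hu j A x x' hA
      _ = ENNReal.ofReal (Real.exp ε) * (∫⁻ x', p.K j (x', u) A ∂(C xt')) + ENNReal.ofReal δ := by
          rw [lintegral_add_right _ measurable_const, lintegral_const, measure_univ, mul_one,
            lintegral_const_mul _ hcoe]
  calc ∫⁻ x, p.K j (x, u) A ∂(C xt)
      ≤ ∫⁻ _, (ENNReal.ofReal (Real.exp ε) * (∫⁻ x', p.K j (x', u) A ∂(C xt'))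
          + ENNReal.ofReal δ) ∂(C xt) := lintegral_mono key
    _ = ENNReal.ofReal (Real.exp ε) * (∫⁻ x', p.K j (x', u) A ∂(C xt')) + ENNReal.ofReal δ := by
          rw [lintegral_const, measure_univ, mul_one]

/-- An integral of a `[0,1]`-bounded function over a probability measure lies in `[0,1]`,
with no measurability assumptions (junk value conventions). -/
lemma integral_mem_Icc {W : Type*} [MeasurableSpace W] (ρ : Measure W) [IsProbabilityMeasure ρ]
    {h : W → ℝ} (h01 : ∀ w, h w ∈ Set.Icc (0 : ℝ) 1) : (∫ w, h w ∂ρ) ∈ Set.Icc (0 : ℝ) 1 := by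
  constructor
  · exact integral_nonneg fun w => (h01 w).1
  · by_cases hint : Integrable h ρ
    · have h1 : ∫ w, h w ∂ρ ≤ ∫ _, (1 : ℝ) ∂ρ :=
        integral_mono hint (integrable_const 1) fun w => (h01 w).2
      simpa using h1
    · rw [integral_undef hint]; norm_num

lemma decRisk_term_mem_Icc {F : Type} (P : F → Measure X) (hP : ∀ f, IsProbabilityMeasure (P f))
    (ℓ : F → Dsp → ℝ) (hl01 : ∀ f φ, ℓ f φ ∈ Set.Icc (0 : ℝ) 1)
    (p : DecProtocol X Dsp m) (f : F) :
    (∫ u, ∫ y, ∫ φ, ℓ f φ ∂(p.D y)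
      ∂(Measure.pi fun j => (P f).bind fun x => p.K j (x, u)) ∂p.PU) ∈ Set.Icc (0 : ℝ) 1 := by
  haveI := p.probU
  haveI := fun j => p.markov j
  haveI := p.markovD
  haveI := hP f
  haveI : ∀ u j, IsProbabilityMeasure ((P f).bind fun x => p.K j (x, u)) := fun u j =>
    isProbabilityMeasure_bind _ ((p.K j).measurable.comp measurable_prodMk_right)
      fun x => inferInstance
  refine integral_mem_Icc _ fun u => ?_
  haveI : ∀ j, IsProbabilityMeasure ((fun j => (P f).bind fun x => p.K j (x, u)) j) :=
    fun j => inferInstance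
  refine integral_mem_Icc _ fun y => ?_
  exact integral_mem_Icc _ fun φ => hl01 f φ

lemma decRisk_nonneg {F : Type} (P : F → Measure X) (hP : ∀ f, IsProbabilityMeasure (P f))
    (ℓ : F → Dsp → ℝ) (hl01 : ∀ f φ, ℓ f φ ∈ Set.Icc (0 : ℝ) 1) (p : DecProtocol X Dsp m) :
    0 ≤ DecProtocol.decRisk P ℓ p :=
  Real.iSup_nonneg fun f => (decRisk_term_mem_Icc P hP ℓ hl01 p f).1

/-- The key risk comparison: composing with a kernel increases the risk by at most
`m` times the total variation bound. -/
lemma decRisk_comp_le {F : Type} (P : F → Measure X) (Q : F → Measure Xt)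
    (hP : ∀ f, IsProbabilityMeasure (P f)) (hQ : ∀ f, IsProbabilityMeasure (Q f))
    (ℓ : F → Dsp → ℝ) (hlm : ∀ f, Measurable (ℓ f))
    (hl01 : ∀ f φ, ℓ f φ ∈ Set.Icc (0 : ℝ) 1)
    (C : Kernel Xt X) [IsMarkovKernel C] (p : DecProtocol X Dsp m)
    {s : ℝ} (hs : ∀ f, tvDist ((Q f).bind ⇑C) (P f) ≤ s) (hs0 : 0 ≤ s) :
    DecProtocol.decRisk Q ℓ (p.comp C) ≤ DecProtocol.decRisk P ℓ p + (m : ℝ) * s := by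
  haveI := p.probU
  haveI := fun j => p.markov j
  haveI := p.markovD
  refine Real.iSup_le (fun f => ?_)
    (add_nonneg (decRisk_nonneg P hP ℓ hl01 p) (by positivity))
  haveI := hP f
  haveI := hQ f
  haveI : IsProbabilityMeasure ((Q f).bind ⇑C) :=
    isProbabilityMeasure_bind _ C.measurable fun x => inferInstance
  -- the post-decision payoff function
  set g : (∀ j, p.Y j) → ℝ := fun y => ∫ φ, ℓ f φ ∂(p.D y) with hg_def
  have hg : Measurable g := measurable_kernel_integral p.D (hlm f)
  have hg01 : ∀ y, g y ∈ Set.Icc (0 : ℝ) 1 := fun y => integral_mem_Icc _ fun φ => hl01 f φ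
  -- kernels for the marginals
  set κP : ∀ j, Kernel p.U (p.Y j) := fun j => mixKernel (P f) (p.K j) with hκP_def
  set κQ : ∀ j, Kernel p.U (p.Y j) := fun j => mixKernel ((Q f).bind ⇑C) (p.K j) with hκQ_def
  haveI : ∀ j, IsMarkovKernel (κP j) := fun j => by rw [hκP_def]; infer_instance
  haveI : ∀ j, IsMarkovKernel (κQ j) := fun j => by rw [hκQ_def]; infer_instance
  have hκP_app : ∀ j u, κP j u = (P f).bind fun x => p.K j (x, u) := fun j u =>
    mixKernel_apply _ _ _
  have hκQ_app : ∀ j u, κQ j u = (Q f).bind fun xt => (p.comp C).K j (xt, u) := by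
    intro j u
    rw [hκQ_def, mixKernel_apply]
    rw [Measure.bind_bind (f := ⇑C) (g := fun x => p.K j (x, u)) C.measurable.aemeasurable
      ((p.K j).measurable.comp measurable_prodMk_right).aemeasurable]
    congr 1
    funext xt
    rw [DecProtocol.comp_K_apply]
  haveI : ∀ u j, IsProbabilityMeasure (κP j u) := fun u j => inferInstance
  haveI : ∀ u j, IsProbabilityMeasure (κQ j u) := fun u j => inferInstance
  -- the risk integrands as measurable functions of u
  set GP : p.U → ℝ := fun u => ∫ y, g y ∂(piKernel κP u) with hGP_def
  set GQ : p.U → ℝ := fun u => ∫ y, g y ∂(piKernel κQ u) with hGQ_def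
  have hGPmeas : Measurable GP := measurable_kernel_integral (piKernel κP) hg
  have hGQmeas : Measurable GQ := measurable_kernel_integral (piKernel κQ) hg
  have hGP01 : ∀ u, GP u ∈ Set.Icc (0 : ℝ) 1 := fun u => integral_mem_Icc _ fun y => hg01 y
  have hGQ01 : ∀ u, GQ u ∈ Set.Icc (0 : ℝ) 1 := fun u => integral_mem_Icc _ fun y => hg01 y
  have hGPint : Integrable GP p.PU := by
    refine (integrable_const (1 : ℝ)).mono' hGPmeas.aestronglyMeasurable (ae_of_all _ fun u => ?_)
    have := hGP01 u
    rw [Real.norm_eq_abs, abs_le]; exact ⟨by linarith [this.1], this.2⟩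
  have hGQint : Integrable GQ p.PU := by
    refine (integrable_const (1 : ℝ)).mono' hGQmeas.aestronglyMeasurable (ae_of_all _ fun u => ?_)
    have := hGQ01 u
    rw [Real.norm_eq_abs, abs_le]; exact ⟨by linarith [this.1], this.2⟩
  -- pointwise comparison
  have hpoint : ∀ u, GQ u ≤ GP u + (m : ℝ) * s := by
    intro u
    have h1 : GQ u - GP u ≤ tvDist (piKernel κQ u) (piKernel κP u) := by
      rw [hGQ_def, hGP_def]
      exact integral_sub_le_tvDist _ _ hg hg01
    have h2 : tvDist (piKernel κQ u) (piKernel κP u) ≤ ∑ j, tvDist (κQ j u) (κP j u) := by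
      rw [piKernel_apply, piKernel_apply]
      exact tvDist_pi _ _ (fun j => inferInstance) (fun j => inferInstance)
    have h3 : ∀ j, tvDist (κQ j u) (κP j u) ≤ s := by
      intro j
      have hcomap : κQ j u = ((Q f).bind ⇑C).bind
          ⇑((p.K j).comap (fun x => (x, u)) measurable_prodMk_right) := by
        rw [hκQ_def, mixKernel_apply]; rfl
      have hcomap' : κP j u = (P f).bind
          ⇑((p.K j).comap (fun x => (x, u)) measurable_prodMk_right) := by
        rw [hκP_def, mixKernel_apply]; rfl
      rw [hcomap, hcomap']
      exact (tvDist_bind_le _ _ _).trans (hs f)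
    have h4 : ∑ j, tvDist (κQ j u) (κP j u) ≤ (m : ℝ) * s := by
      calc ∑ j, tvDist (κQ j u) (κP j u) ≤ ∑ _j : Fin m, s := Finset.sum_le_sum fun j _ => h3 j
        _ = (m : ℝ) * s := by simp [mul_comm]
    linarith
  -- conclude
  have hIQ : (∫ u, ∫ y, ∫ φ, ℓ f φ ∂((p.comp C).D y)
      ∂(Measure.pi fun j => (Q f).bind fun xt => (p.comp C).K j (xt, u))
      ∂(p.comp C).PU) = ∫ u, GQ u ∂p.PU := by
    refine integral_congr_ae (ae_of_all _ fun u => ?_)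
    simp only [hGQ_def, hg_def, piKernel_apply]
    have hmeq : (fun j => (Q f).bind fun xt => ((p.comp C).K j) (xt, u)) = fun j => κQ j u :=
      funext fun j => (hκQ_app j u).symm
    rw [hmeq]
    rfl
  have hIP : (∫ u, ∫ y, ∫ φ, ℓ f φ ∂(p.D y)
      ∂(Measure.pi fun j => (P f).bind fun x => p.K j (x, u)) ∂p.PU) = ∫ u, GP u ∂p.PU := by
    refine integral_congr_ae (ae_of_all _ fun u => ?_)
    simp only [hGP_def, hg_def, piKernel_apply]
    have hmeq : (fun j => (P f).bind fun x => (p.K j) (x, u)) = fun j => κP j u :=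
      funext fun j => (hκP_app j u).symm
    rw [hmeq]
  have hbdd : BddAbove (Set.range fun f : F => ∫ u, ∫ y, ∫ φ, ℓ f φ ∂(p.D y)
      ∂(Measure.pi fun j => (P f).bind fun x => p.K j (x, u)) ∂p.PU) := by
    refine ⟨1, ?_⟩
    rintro x ⟨f', rfl⟩
    exact (decRisk_term_mem_Icc P hP ℓ hl01 p f').2
  calc (∫ u, ∫ y, ∫ φ, ℓ f φ ∂((p.comp C).D y)
      ∂(Measure.pi fun j => (Q f).bind fun xt => (p.comp C).K j (xt, u)) ∂(p.comp C).PU)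
      = ∫ u, GQ u ∂p.PU := hIQ
    _ ≤ ∫ u, (GP u + (m : ℝ) * s) ∂p.PU :=
        integral_mono hGQint (hGPint.add (integrable_const _)) hpoint
    _ = (∫ u, GP u ∂p.PU) + (m : ℝ) * s := by
        rw [integral_add hGPint (integrable_const _)]
        simp
    _ ≤ DecProtocol.decRisk P ℓ p + (m : ℝ) * s := by
        refine add_le_add_left ?_ _
        rw [← hIP]
        exact le_ciSup hbdd f

end Protocol


section Core

/-- The core comparison, for an arbitrary pair of protocol classes that is stable under
composition with Markov kernels in both directions. -/
lemma core_comparison {F X Xt Dsp : Type} [MeasurableSpace X] [MeasurableSpace Xt]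
    [MeasurableSpace Dsp] {m : ℕ}
    (P : F → Measure X) (Q : F → Measure Xt)
    (hPprob : ∀ f, IsProbabilityMeasure (P f)) (hQprob : ∀ f, IsProbabilityMeasure (Q f))
    (ϱ : ℝ) (hϱ : 0 < ϱ) (hdef : (m : ℝ) * deficiency Q P ≤ ϱ)
    (ℓ : F → Dsp → ℝ) (hℓmeas : ∀ f, Measurable (ℓ f))
    (hℓ01 : ∀ f φ, ℓ f φ ∈ Set.Icc (0 : ℝ) 1)
    (SP : DecProtocol X Dsp m → Prop) (SQ : DecProtocol Xt Dsp m → Prop)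
    (hPQ : ∀ (C : Kernel Xt X) [IsMarkovKernel C] (p : DecProtocol X Dsp m),
      SP p → SQ (p.comp C))
    (hQP : ∀ (C : Kernel X Xt) [IsMarkovKernel C] (p : DecProtocol Xt Dsp m),
      SQ p → SP (p.comp C)) :
    (⨅ p : {p : DecProtocol Xt Dsp m // SQ p}, DecProtocol.decRisk Q ℓ p.1) -
      (⨅ p : {p : DecProtocol X Dsp m // SP p}, DecProtocol.decRisk P ℓ p.1) ≤ ϱ := by
  have hPinf_nonneg : 0 ≤ ⨅ p : {p : DecProtocol X Dsp m // SP p},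
      DecProtocol.decRisk P ℓ p.1 := by
    rcases isEmpty_or_nonempty {p : DecProtocol X Dsp m // SP p} with h | h
    · rw [Real.iInf_of_isEmpty]
    · exact le_ciInf fun p => decRisk_nonneg P hPprob ℓ hℓ01 p.1
  rcases isEmpty_or_nonempty F with hF | hF
  · -- no parameters : all risks are `0`
    have hQ0 : ∀ p : DecProtocol Xt Dsp m, DecProtocol.decRisk Q ℓ p = 0 := fun p =>
      Real.iSup_of_isEmpty _
    rcases isEmpty_or_nonempty {p : DecProtocol Xt Dsp m // SQ p} with h | h
    · rw [Real.iInf_of_isEmpty]; linarith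
    · have hz : (⨅ p : {p : DecProtocol Xt Dsp m // SQ p}, DecProtocol.decRisk Q ℓ p.1)
          = 0 := by
        simp only [hQ0]
        exact ciInf_const
      rw [hz]; linarith
  · obtain ⟨f₀⟩ := hF
    haveI := hPprob f₀; haveI := hQprob f₀
    rcases isEmpty_or_nonempty {p : DecProtocol Xt Dsp m // SQ p} with hSQ | hSQ
    · rw [Real.iInf_of_isEmpty]; linarith
    · have hSP : Nonempty {p : DecProtocol X Dsp m // SP p} := by
        obtain ⟨⟨q, hq⟩⟩ := hSQ
        exact ⟨⟨q.comp (Kernel.const X (Q f₀)), hQP _ q hq⟩⟩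
      rw [sub_le_iff_le_add]
      refine le_of_forall_pos_le_add fun ε hε => ?_
      haveI hCne : Nonempty {C : Kernel Xt X // IsMarkovKernel C} :=
        ⟨⟨Kernel.const Xt (P f₀), inferInstance⟩⟩
      set ε' := ε / (2 * ((m : ℝ) + 1)) with hε'_def
      have hε'pos : 0 < ε' := by positivity
      obtain ⟨⟨C, hC⟩, hCb⟩ := exists_lt_of_ciInf_lt
        (show (⨅ C : {C : Kernel Xt X // IsMarkovKernel C},
            ⨆ f, tvDist ((Q f).bind fun x => C.1 x) (P f)) < deficiency Q P + ε' by
          have : deficiency Q P < deficiency Q P + ε' := by linarith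
          exact this)
      haveI := hC
      set s := deficiency Q P + ε' with hs_def
      have hd0 : 0 ≤ deficiency Q P := by
        refine le_ciInf fun C' => ?_
        haveI := C'.2
        refine Real.iSup_nonneg fun f => ?_
        haveI := hPprob f; haveI := hQprob f
        haveI : IsProbabilityMeasure ((Q f).bind fun x => C'.1 x) :=
          isProbabilityMeasure_bind _ C'.1.measurable fun x => inferInstance
        exact tvDist_nonneg _ _
      have hs0 : 0 ≤ s := by rw [hs_def]; linarith
      have hsf : ∀ f, tvDist ((Q f).bind ⇑C) (P f) ≤ s := by
        intro f
        have hbdd : BddAbove (Set.range fun f => tvDist ((Q f).bind fun x => C x) (P f)) := by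
          refine ⟨1, ?_⟩
          rintro x ⟨f', rfl⟩
          haveI := hPprob f'; haveI := hQprob f'
          haveI : IsProbabilityMeasure ((Q f').bind fun x => C x) :=
            isProbabilityMeasure_bind _ C.measurable fun x => inferInstance
          exact tvDist_le_one _ _
        exact le_trans (le_ciSup hbdd f) hCb.le
      have hPlt : (⨅ p : {p : DecProtocol X Dsp m // SP p}, DecProtocol.decRisk P ℓ p.1)
          < (⨅ p : {p : DecProtocol X Dsp m // SP p}, DecProtocol.decRisk P ℓ p.1) + ε / 2 := by
        linarith
      obtain ⟨⟨p, hp⟩, hpb⟩ := exists_lt_of_ciInf_lt hPlt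
      have hm0 : (0 : ℝ) ≤ (m : ℝ) := Nat.cast_nonneg m
      have hms : (m : ℝ) * s ≤ ϱ + ε / 2 := by
        have hfact : (m : ℝ) * ε' * (2 * ((m : ℝ) + 1)) = (m : ℝ) * ε := by
          rw [hε'_def]; field_simp
        have h1 : (m : ℝ) * ε' ≤ ε / 2 := by nlinarith [hε'pos.le, hε.le]
        rw [hs_def, mul_add]
        linarith
      calc (⨅ p : {p : DecProtocol Xt Dsp m // SQ p}, DecProtocol.decRisk Q ℓ p.1)
          ≤ DecProtocol.decRisk Q ℓ (p.comp C) := by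
            have hbb : BddBelow (Set.range fun p : {p : DecProtocol Xt Dsp m // SQ p} =>
                DecProtocol.decRisk Q ℓ p.1) := by
              refine ⟨0, ?_⟩
              rintro x ⟨q, rfl⟩
              exact decRisk_nonneg Q hQprob ℓ hℓ01 q.1
            exact ciInf_le hbb ⟨p.comp C, hPQ C p hp⟩
        _ ≤ DecProtocol.decRisk P ℓ p + (m : ℝ) * s :=
            decRisk_comp_le P Q hPprob hQprob ℓ hℓmeas hℓ01 C p hsf hs0
        _ ≤ ((⨅ p : {p : DecProtocol X Dsp m // SP p}, DecProtocol.decRisk P ℓ p.1) + ε / 2)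
            + (ϱ + ε / 2) := add_le_add hpb.le hms
        _ = ϱ + (⨅ p : {p : DecProtocol X Dsp m // SP p}, DecProtocol.decRisk P ℓ p.1) + ε := by
            ring

end Core

/-- Le Cam's comparison of distributed decision risks: if `m·𝔡(𝒬;𝒫) ≤ ϱ` for
dominated models on standard Borel spaces, then for any decision space and any
loss function `ℓ` with values in `[0,1]`,
`inf_{D ∈ 𝒥_𝒬} R_𝒬(D,ℓ) − inf_{D ∈ 𝒥_𝒫} R_𝒫(D,ℓ) ≤ ϱ`, for each of the four
matching classes of one-shot protocols: shared- or local-randomness, with a `b`-bit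
bandwidth constraint or a local `(ε,δ)`-differential privacy constraint. -/
theorem deficiency_decision_risk_comparison
    {F X Xt Dsp : Type} [MeasurableSpace X] [StandardBorelSpace X]
    [MeasurableSpace Xt] [StandardBorelSpace Xt] [MeasurableSpace Dsp]
    (P : F → Measure X) (Q : F → Measure Xt)
    (hPprob : ∀ f, IsProbabilityMeasure (P f))
    (hQprob : ∀ f, IsProbabilityMeasure (Q f))
    (hPdom : ∃ μ : Measure X, SigmaFinite μ ∧ ∀ f, P f ≪ μ)
    (hQdom : ∃ μ : Measure Xt, SigmaFinite μ ∧ ∀ f, Q f ≪ μ)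
    (m : ℕ) (ϱ : ℝ) (hϱ : 0 < ϱ)
    (hdef : (m : ℝ) * deficiency Q P ≤ ϱ)
    (ℓ : F → Dsp → ℝ) (hℓmeas : ∀ f, Measurable (ℓ f))
    (hℓ01 : ∀ f φ, ℓ f φ ∈ Set.Icc (0 : ℝ) 1) :
    (∀ b : ℕ,
      (⨅ p : {p : DecProtocol Xt Dsp m // p.HasBandwidth b},
          DecProtocol.decRisk Q ℓ p.1) -
        (⨅ p : {p : DecProtocol X Dsp m // p.HasBandwidth b},
          DecProtocol.decRisk P ℓ p.1) ≤ ϱ)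
    ∧ (∀ b : ℕ,
      (⨅ p : {p : DecProtocol Xt Dsp m // p.HasBandwidth b ∧ p.IsLocalRandomness},
          DecProtocol.decRisk Q ℓ p.1) -
        (⨅ p : {p : DecProtocol X Dsp m // p.HasBandwidth b ∧ p.IsLocalRandomness},
          DecProtocol.decRisk P ℓ p.1) ≤ ϱ)
    ∧ (∀ ε δ : ℝ, 0 ≤ ε → 0 ≤ δ →
      (⨅ p : {p : DecProtocol Xt Dsp m // p.IsDP ε δ},
          DecProtocol.decRisk Q ℓ p.1) -
        (⨅ p : {p : DecProtocol X Dsp m // p.IsDP ε δ},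
          DecProtocol.decRisk P ℓ p.1) ≤ ϱ)
    ∧ (∀ ε δ : ℝ, 0 ≤ ε → 0 ≤ δ →
      (⨅ p : {p : DecProtocol Xt Dsp m // p.IsDP ε δ ∧ p.IsLocalRandomness},
          DecProtocol.decRisk Q ℓ p.1) -
        (⨅ p : {p : DecProtocol X Dsp m // p.IsDP ε δ ∧ p.IsLocalRandomness},
          DecProtocol.decRisk P ℓ p.1) ≤ ϱ) := by
  refine ⟨fun b => ?_, fun b => ?_, fun ε δ hε hδ => ?_, fun ε δ hε hδ => ?_⟩
  · exact core_comparison P Q hPprob hQprob ϱ hϱ hdef ℓ hℓmeas hℓ01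
      (fun p => p.HasBandwidth b) (fun p => p.HasBandwidth b)
      (fun C _ p hp => p.comp_hasBandwidth C hp)
      (fun C _ p hp => p.comp_hasBandwidth C hp)
  · exact core_comparison P Q hPprob hQprob ϱ hϱ hdef ℓ hℓmeas hℓ01
      (fun p => p.HasBandwidth b ∧ p.IsLocalRandomness)
      (fun p => p.HasBandwidth b ∧ p.IsLocalRandomness)
      (fun C _ p hp => ⟨p.comp_hasBandwidth C hp.1, p.comp_isLocalRandomness C hp.2⟩)
      (fun C _ p hp => ⟨p.comp_hasBandwidth C hp.1, p.comp_isLocalRandomness C hp.2⟩)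
  · exact core_comparison P Q hPprob hQprob ϱ hϱ hdef ℓ hℓmeas hℓ01
      (fun p => p.IsDP ε δ) (fun p => p.IsDP ε δ)
      (fun C _ p hp => p.comp_isDP C hp)
      (fun C _ p hp => p.comp_isDP C hp)
  · exact core_comparison P Q hPprob hQprob ϱ hϱ hdef ℓ hℓmeas hℓ01
      (fun p => p.IsDP ε δ ∧ p.IsLocalRandomness)
      (fun p => p.IsDP ε δ ∧ p.IsLocalRandomness)
      (fun C _ p hp => ⟨p.comp_isDP C hp.1, p.comp_isLocalRandomness C hp.2⟩)
      (fun C _ p hp => ⟨p.comp_isDP C hp.1, p.comp_isLocalRandomness C hp.2⟩)
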